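/- arXiv:1001.3601 — 3 statements merged into one kernel-verified Lean document; each statement's English description precedes it below -/
import Mathlib

section
/- Let S = k[x₁,…,xₙ] and let M be a squarefree S-module. If β_{i,a}^S(M) := dim_k [Torᵢ^S(k, M)]_a is nonzero for some a ∈ Zⁿ, then a is a squarefree vector, i.e., every coordinate of a is 0 or 1. -/
/-! The Betti numbers are the homology of the degree-`a` strand of the Koszul complex, whose
`E`-th term is `M_{a - χ_E}`. If `a j < 0`, every term vanishes. If `a j ≥ 2`, then for `j ∈ E`
the `j`-th coordinate of `a - χ_E` is positive, so squarefreeness makes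
`x_j : M_{a - χ_E} → M_{a - χ_{E ∖ j}}` bijective; contracting with `e_j` and dividing by `x_j`
gives a homotopy `s` with `d s + s d = id`, so the strand is exact. -/

open MvPolynomial Finset
open scoped Classical
set_option linter.unusedSectionVars false
set_option maxHeartbeats 1000000
set_option synthInstance.maxHeartbeats 400000

noncomputable section

def chi {ι : Type} [DecidableEq ι] (F : Finset ι) : ι → ℕ := fun j => if j ∈ F then 1 else 0
def mon (k : Type) [Field k] {ι : Type} [Fintype ι] (b : ι → ℕ) : MvPolynomial ι k :=
  ∏ j, (X j : MvPolynomial ι k) ^ (b j)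

structure GradedMod (k : Type) [Field k] (ι : Type) [Fintype ι] [DecidableEq ι] where
  carrier : Type
  [acg : AddCommGroup carrier]
  [modS : Module (MvPolynomial ι k) carrier]
  [modk : Module k carrier]
  [tower : IsScalarTower k (MvPolynomial ι k) carrier]
  deg : (ι → ℕ) → Submodule k carrier
  internal : DirectSum.IsInternal deg
  mul_mem : ∀ (j : ι) (a : ι → ℕ) (x : carrier), x ∈ deg a →
      (X j : MvPolynomial ι k) • x ∈ deg (a + Pi.single j 1)
  finite : Module.Finite (MvPolynomial ι k) carrier

attribute [instance] GradedMod.acg GradedMod.modS GradedMod.modk GradedMod.tower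

namespace GradedMod

variable {k : Type} [Field k] {ι : Type} [Fintype ι] [DecidableEq ι]

lemma mon_zero : mon k (0 : ι → ℕ) = 1 := by simp [mon]

lemma mon_add (a b : ι → ℕ) : mon k (a + b) = mon k a * mon k b := by
  simp [mon, pow_add, Finset.prod_mul_distrib]

lemma mon_single (j : ι) : mon k (Pi.single j 1 : ι → ℕ) = X j := by
  rw [mon, Finset.prod_eq_single j]
  · simp
  · intro b _ hb; rw [Pi.single_eq_of_ne hb]; simp
  · intro h; exact absurd (Finset.mem_univ j) h

lemma smul_comm_k (M : GradedMod k ι) (p : MvPolynomial ι k) (c : k) (x : M.carrier) :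
    p • (c • x) = c • (p • x) := by
  rw [← IsScalarTower.algebraMap_smul (MvPolynomial ι k) c x, smul_smul, mul_comm,
    ← smul_smul, IsScalarTower.algebraMap_smul]

lemma mon_smul_mem (M : GradedMod k ι) :
    ∀ (n : ℕ) (b a : ι → ℕ), ∑ j, b j = n → ∀ x ∈ M.deg a, mon k b • x ∈ M.deg (a + b) := by
  intro n
  induction n with
  | zero =>
    intro b a hb x hx
    have hb0 : b = 0 := by
      funext j
      have := (Finset.sum_eq_zero_iff).1 hb j (Finset.mem_univ j)
      simpa using this
    subst hb0
    simpa [mon_zero] using hx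
  | succ m ih =>
    intro b a hb x hx
    obtain ⟨j, hj⟩ : ∃ j, b j ≠ 0 := by
      by_contra hc
      push_neg at hc
      rw [Finset.sum_eq_zero fun j _ => hc j] at hb
      exact Nat.succ_ne_zero m hb.symm
    set b' := Function.update b j (b j - 1) with hb'
    have hbb : b = b' + Pi.single j 1 := by
      funext i
      by_cases hij : i = j
      · subst hij
        simp only [Pi.add_apply, hb', Function.update_self, Pi.single_eq_same]
        omega
      · simp [hb', Function.update_of_ne hij, Pi.single_eq_of_ne hij]
    have hsum : ∑ i, b' i = m := by
      have h1 : ∑ i, b i = (∑ i, b' i) + ∑ i, (Pi.single j 1 : ι → ℕ) i := by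
        rw [← Finset.sum_add_distrib]; rw [hbb]; rfl
      have h2 : ∑ i, (Pi.single j 1 : ι → ℕ) i = 1 := by
        simp [Finset.sum_pi_single']
      omega
    have h1 := ih b' a hsum x hx
    have h2 := M.mul_mem j (a + b') _ h1
    have h3 : mon k b • x = (X j : MvPolynomial ι k) • (mon k b' • x) := by
      rw [hbb, mon_add, mon_single, smul_smul, mul_comm]
    rw [h3, hbb, ← add_assoc]
    exact h2

end GradedMod

namespace GradedMod
variable {k : Type} [Field k] {ι : Type} [Fintype ι] [DecidableEq ι]

/-- Yanagawa's squarefreeness condition: multiplication by `x^b` is a bijection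
`M_a → M_{a+b}` whenever `supp b ⊆ supp a`. -/
def IsSquarefree (M : GradedMod k ι) : Prop :=
  ∀ a b : ι → ℕ, (∀ j, b j ≠ 0 → a j ≠ 0) →
    Set.BijOn (fun x : M.carrier => mon k b • x) (M.deg a) (M.deg (a + b))

lemma chi_insert {ℓ : ι} {F : Finset ι} (h : ℓ ∉ F) :
    chi (insert ℓ F) = chi F + Pi.single ℓ 1 := by
  funext j
  by_cases hj : j = ℓ
  · subst hj; simp [chi, h, Pi.single_eq_same]
  · simp [chi, hj, Pi.single_eq_of_ne hj]

lemma chi_sdiff {F G : Finset ι} (h : F ⊆ G) : chi F + chi (G \ F) = chi G := by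
  funext j
  by_cases hF : j ∈ F
  · simp [chi, hF, h hF, Finset.mem_sdiff]
  · by_cases hG : j ∈ G <;> simp [chi, hF, hG, Finset.mem_sdiff]

/-- Multiplication by the variable `x_ℓ` as a `k`-linear map on squarefree graded pieces. -/
def multMap (M : GradedMod k ι) (ℓ : ι) (F : Finset ι) (h : ℓ ∉ F) :
    M.deg (chi F) →ₗ[k] M.deg (chi (insert ℓ F)) where
  toFun x := ⟨(X ℓ : MvPolynomial ι k) • (x : M.carrier), by
    have h1 := M.mul_mem ℓ (chi F) x.1 x.2
    rw [chi_insert h]; exact h1⟩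
  map_add' x y := by ext; simp [smul_add]
  map_smul' c x := by
    ext
    have h1 : ((c • x : M.deg (chi F)) : M.carrier) = c • (x : M.carrier) := rfl
    simp only [RingHom.id_apply, SetLike.val_smul, h1]
    exact M.smul_comm_k _ c _

end GradedMod

/-- A "combinatorial squarefree module": a family of `k`-vector spaces indexed by the
squarefree degrees `F ⊆ ι` together with the multiplication maps `x^{G∖F} : M_F → M_G`. -/
structure CombSqMod (k : Type) [Field k] (ι : Type) [Fintype ι] [DecidableEq ι] where
  piece : Finset ι → Type
  [acg : ∀ F, AddCommGroup (piece F)]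
  [modk : ∀ F, Module k (piece F)]
  mult : ∀ (F G : Finset ι), F ⊆ G → (piece F →ₗ[k] piece G)

attribute [instance] CombSqMod.acg CombSqMod.modk

namespace CombSqMod

variable {k : Type} [Field k] {ι : Type} [Fintype ι] [DecidableEq ι]

/-- Index set of the degree-`F` strand of the Koszul complex on the variables in `W`. -/
abbrev kIdx (W F : Finset ι) (j : ℕ) : Type := {E : Finset ι // E ⊆ W ∧ E ⊆ F ∧ E.card = j}

/-- Terms of the degree-`F` strand of the Koszul complex of `N` over `k[xⱼ : j ∈ W]`. -/
abbrev kSpace (N : CombSqMod k ι) (W F : Finset ι) (j : ℕ) : Type :=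
  ∀ E : kIdx W F j, N.piece (F \ E.1)

/-- Koszul sign (with respect to a fixed enumeration of the variables). -/
def ksign (E : Finset ι) (ℓ : ι) : ℤ :=
  (-1 : ℤ) ^ (E.filter fun j => Fintype.equivFin ι j < Fintype.equivFin ι ℓ).card

/-- The Koszul differential (degree-`F` strand, variables in `W`). -/
def kd (N : CombSqMod k ι) (W F : Finset ι) (j : ℕ) :
    kSpace N W F (j + 1) →ₗ[k] kSpace N W F j :=
  LinearMap.pi fun E' =>
    ∑ ℓ ∈ ((F ∩ W) \ E'.1).attach,
      ksign E'.1 ℓ.1 •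
        ((N.mult (F \ insert ℓ.1 E'.1) (F \ E'.1)
            (Finset.sdiff_subset_sdiff (Finset.Subset.refl F) (Finset.subset_insert ℓ.1 E'.1))).comp
          (LinearMap.proj (⟨insert ℓ.1 E'.1, by
              have h := ℓ.2
              simp only [Finset.mem_sdiff, Finset.mem_inter] at h
              exact ⟨Finset.insert_subset h.1.2 E'.2.1, Finset.insert_subset h.1.1 E'.2.2.1,
                by rw [Finset.card_insert_of_notMem h.2, E'.2.2.2]⟩⟩ : kIdx W F (j + 1))))

/-- Cycles of the Koszul complex. -/
def kcycles (N : CombSqMod k ι) (W F : Finset ι) : (i : ℕ) → Submodule k (kSpace N W F i)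
  | 0 => ⊤
  | (j + 1) => LinearMap.ker (kd N W F j)

/-- The graded Betti number `β_{i,F}` of `N` over `k[xⱼ : j ∈ W]`, defined (as usual, for
squarefree degrees) as the `k`-dimension of the degree-`F` part of the `i`-th Koszul homology,
i.e. of `[Tor_i(k, N)]_F`. -/
def bettiNum (N : CombSqMod k ι) (W : Finset ι) (i : ℕ) (F : Finset ι) : ℕ :=
  Module.finrank k
    (↥(kcycles N W F i) ⧸
      (Submodule.comap (kcycles N W F i).subtype (LinearMap.range (kd N W F i))))

/-- The (Krull) dimension of the restriction `N|_W`: for squarefree modules this is the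
maximal cardinality of a face `F ⊆ W` with nonvanishing piece. -/
def combDim (N : CombSqMod k ι) (W : Finset ι) : ℕ :=
  Finset.sup (W.powerset.filter fun F => Nontrivial (N.piece F)) Finset.card

/-- `N|_W` is a Cohen–Macaulay module of dimension `d` over `k[xⱼ : j ∈ W]`
(via the Auslander–Buchsbaum characterization: `β_{i,F} = 0` for `i > #W − d`). -/
def IsCMon (N : CombSqMod k ι) (W : Finset ι) (d : ℕ) : Prop :=
  combDim N W = d ∧
    ∀ (i : ℕ) (F : Finset ι), F ⊆ W → (W.card : ℤ) - d < i → bettiNum N W i F = 0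

/-- The restriction `N|_W` is the zero module. -/
def IsZeroOn (N : CombSqMod k ι) (W : Finset ι) : Prop :=
  ∀ F : Finset ι, F ⊆ W → Subsingleton (N.piece F)

/-- `N` is `l`-Cohen–Macaulay: for every `W` with `#W < l`, the restriction of `N` away
from `W` is zero or Cohen–Macaulay of the same dimension as `N`. -/
def lCM (N : CombSqMod k ι) (l : ℕ) : Prop :=
  ∀ W : Finset ι, W.card < l →
    IsZeroOn N Wᶜ ∨ IsCMon N Wᶜ (combDim N Finset.univ)

/-- `N` is generated by its degree-`0` part. -/
def GenByDeg0 (N : CombSqMod k ι) : Prop :=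
  ∀ G : Finset ι, Function.Surjective (N.mult ∅ G (Finset.empty_subset G))

end CombSqMod

namespace GradedMod

variable {k : Type} [Field k] {ι : Type} [Fintype ι] [DecidableEq ι]

/-- The combinatorial squarefree module underlying a graded module: pieces are the
squarefree graded components `M_F := M_{χ_F}` and the maps are multiplication by
`x^{G ∖ F}`. -/
def toComb (M : GradedMod k ι) : CombSqMod k ι where
  piece F := M.deg (chi F)
  mult F G hFG :=
    { toFun := fun x => ⟨mon k (chi (G \ F)) • x.1, by
        have h1 := M.mon_smul_mem (∑ j, chi (G \ F) j) (chi (G \ F)) (chi F) rfl x.1 x.2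
        rwa [chi_sdiff hFG] at h1⟩
      map_add' := fun x y => by ext; simp [smul_add]
      map_smul' := fun c x => by
        ext
        have h1 : ((c • x : M.deg (chi F)) : M.carrier) = c • (x : M.carrier) := rfl
        simp only [RingHom.id_apply, SetLike.val_smul, h1]
        exact M.smul_comm_k _ c _ }



/-- The graded Betti numbers `β_{i,F}^S(M)` of `M` over `S = k[xⱼ : j ∈ ι]`. -/
def betti (M : GradedMod k ι) (i : ℕ) (F : Finset ι) : ℕ :=
  CombSqMod.bettiNum M.toComb Finset.univ i F

/-- The Krull dimension of `M` (for squarefree modules: the largest size of a face with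
nonzero component). -/
def dim (M : GradedMod k ι) : ℕ := CombSqMod.combDim M.toComb Finset.univ

/-- `M` is a Cohen–Macaulay module of dimension `d`. -/
def IsCMdim (M : GradedMod k ι) (d : ℕ) : Prop := CombSqMod.IsCMon M.toComb Finset.univ d

/-- `M` is `l`-Cohen–Macaulay. -/
def lCM (M : GradedMod k ι) (l : ℕ) : Prop := CombSqMod.lCM M.toComb l

end GradedMod

namespace GradedMod

variable {k : Type} [Field k] {ι : Type} [Fintype ι] [DecidableEq ι]

/-- The degree-`a` component of `M` for an arbitrary integer vector `a ∈ ℤ^ι`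
(zero outside `ℕ^ι`). -/
def degZ (M : GradedMod k ι) (a : ι → ℤ) : Submodule k M.carrier :=
  if (∀ j, 0 ≤ a j) then M.deg (fun j => (a j).toNat) else ⊥

/-- The `ℤ`-valued indicator vector of `E`. -/
def chiZ (E : Finset ι) : ι → ℤ := fun j => if j ∈ E then 1 else 0

lemma degZ_pos (M : GradedMod k ι) {a : ι → ℤ} (h : ∀ j, 0 ≤ a j) :
    degZ M a = M.deg (fun j => (a j).toNat) := by
  unfold degZ
  exact if_pos h

lemma degZ_neg (M : GradedMod k ι) {a : ι → ℤ} (h : ¬ ∀ j, 0 ≤ a j) : degZ M a = ⊥ := by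
  unfold degZ
  exact if_neg h

/-- Multiplication by `x_ℓ` between integer-degree components. -/
def multZto (M : GradedMod k ι) (ℓ : ι) (b c : ι → ℤ) (h : c = b + Pi.single ℓ 1) :
    ↥(degZ M b) →ₗ[k] ↥(degZ M c) where
  toFun x := ⟨(X ℓ : MvPolynomial ι k) • (x : M.carrier), by
    by_cases hb : ∀ j, 0 ≤ b j
    · have hx : (x : M.carrier) ∈ M.deg (fun j => (b j).toNat) :=
        (degZ_pos M hb).le x.2
      have h2 := M.mul_mem ℓ _ _ hx
      have hc : ∀ j, 0 ≤ c j := by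
        intro j
        rcases eq_or_ne j ℓ with hj | hj
        · subst hj
          have hb2 := hb j
          simp only [h, Pi.add_apply, Pi.single_eq_same]
          omega
        · simpa [h, Pi.single_eq_of_ne hj] using hb j
      refine (degZ_pos M hc).ge ?_
      convert h2 using 2
      funext j
      rcases eq_or_ne j ℓ with hj | hj
      · subst hj
        have hb2 := hb j
        simp only [h, Pi.add_apply, Pi.single_eq_same]
        omega
      · simp [h, Pi.single_eq_of_ne hj]
    · have hx0 : (x : M.carrier) = 0 := by
        have h2 := x.2
        simpa [degZ_neg M hb] using h2
      rw [hx0, smul_zero]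
      exact zero_mem _⟩
  map_add' x y := by ext; simp [smul_add]
  map_smul' c' x := by
    ext
    have h1 : ((c' • x : ↥(degZ M b)) : M.carrier) = c' • (x : M.carrier) := rfl
    simp only [RingHom.id_apply, SetLike.val_smul, h1]
    exact M.smul_comm_k _ c' _

abbrev zIdx (ι : Type) [Fintype ι] [DecidableEq ι] (i : ℕ) : Type := {E : Finset ι // E.card = i}

/-- The degree-`a` strand (`a ∈ ℤ^ι`) of the Koszul complex of `M`. -/
abbrev zSpace (M : GradedMod k ι) (a : ι → ℤ) (i : ℕ) : Type :=
  ∀ E : zIdx ι i, ↥(degZ M (a - chiZ E.1))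

instance (M : GradedMod k ι) (a : ι → ℤ) (i : ℕ) : AddCommGroup (zSpace M a i) :=
  Pi.addCommGroup

instance (M : GradedMod k ι) (a : ι → ℤ) (i : ℕ) : Module k (zSpace M a i) :=
  Pi.module _ _ _

/-- The Koszul differential of the degree-`a` strand. -/
def zd (M : GradedMod k ι) (a : ι → ℤ) (j : ℕ) :
    zSpace M a (j + 1) →ₗ[k] zSpace M a j :=
  LinearMap.pi fun E' =>
    ∑ ℓ ∈ ((E'.1)ᶜ).attach,
      CombSqMod.ksign E'.1 ℓ.1 •
        ((multZto M ℓ.1 (a - chiZ (insert ℓ.1 E'.1)) (a - chiZ E'.1) (by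
            have hℓ : ℓ.1 ∉ E'.1 := Finset.mem_compl.1 ℓ.2
            funext j'
            simp only [Pi.add_apply, Pi.sub_apply, chiZ]
            by_cases hj : j' = ℓ.1
            · subst hj
              simp [hℓ, Pi.single_eq_same]
            · simp [Pi.single_eq_of_ne hj, hj]
            )).comp
          (LinearMap.proj
            (⟨insert ℓ.1 E'.1, by
                rw [Finset.card_insert_of_notMem (Finset.mem_compl.1 ℓ.2), E'.2]⟩ :
              zIdx ι (j + 1))))

/-- Cycles. -/
def zcycles (M : GradedMod k ι) (a : ι → ℤ) : (i : ℕ) → Submodule k (zSpace M a i)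
  | 0 => ⊤
  | (j + 1) => LinearMap.ker (zd M a j)

/-- The graded Betti number `β_{i,a}(M) = dim_k [Tor_i^S(k, M)]_a` for `a ∈ ℤ^ι`,
computed as Koszul homology. -/
def bettiZ (M : GradedMod k ι) (i : ℕ) (a : ι → ℤ) : ℕ :=
  Module.finrank k
    (↥(zcycles M a i) ⧸
      (Submodule.comap (zcycles M a i).subtype (LinearMap.range (zd M a i))))

end GradedMod

namespace CombSqMod

variable {ι : Type} [Fintype ι] [DecidableEq ι]

lemma ksign_mul_self (E : Finset ι) (ℓ : ι) : ksign E ℓ * ksign E ℓ = 1 := by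
  rw [ksign, ← pow_add, ← two_mul, pow_mul, neg_one_sq, one_pow]

lemma ksign_insert {A : Finset ι} {m : ι} (hm : m ∉ A) (ℓ : ι) :
    ksign (insert m A) ℓ =
      (if Fintype.equivFin ι m < Fintype.equivFin ι ℓ then -1 else 1) * ksign A ℓ := by
  unfold ksign
  rw [Finset.filter_insert]
  split_ifs
  · rw [Finset.card_insert_of_notMem (fun h => hm (Finset.mem_of_mem_filter m h)), pow_succ,
      mul_comm]
  · rw [one_mul]

lemma ksign_insert_mul_ksign_insert {A : Finset ι} {j ℓ : ι} (hj : j ∉ A) (hℓ : ℓ ∉ A)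
    (hne : ℓ ≠ j) :
    ksign (insert j A) ℓ * ksign (insert ℓ A) j = -(ksign A j * ksign A ℓ) := by
  rw [ksign_insert hj, ksign_insert hℓ]
  have hne' : Fintype.equivFin ι ℓ ≠ Fintype.equivFin ι j :=
    (Fintype.equivFin ι).injective.ne hne
  rcases hne'.lt_or_gt with hlt | hlt
  · rw [if_neg (not_lt.2 hlt.le), if_pos hlt]; ring
  · rw [if_pos hlt, if_neg (not_lt.2 hlt.le)]; ring

end CombSqMod

namespace GradedMod

open CombSqMod

variable {k : Type} [Field k] {ι : Type} [Fintype ι] [DecidableEq ι] (M : GradedMod k ι)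
  {a : ι → ℤ}

lemma subsingleton_degZ {j : ι} (hj : a j < 0) : Subsingleton (degZ M a) := by
  rw [degZ_neg M fun h => (h j).not_gt hj]
  infer_instance

@[simp]
lemma coe_multZto {ℓ : ι} {b c : ι → ℤ} (hc : c = b + Pi.single ℓ 1) (x : degZ M b) :
    (multZto M ℓ b c hc x : M.carrier) = (X ℓ : MvPolynomial ι k) • (x : M.carrier) :=
  rfl

lemma multZto_bijective (hsf : M.IsSquarefree) {ℓ : ι} {b c : ι → ℤ}
    (hc : c = b + Pi.single ℓ 1) (hb : 1 ≤ b ℓ) : Function.Bijective (multZto M ℓ b c hc) := by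
  by_cases hnn : ∀ j, 0 ≤ b j
  · have hnn' : ∀ j, 0 ≤ c j := by
      intro j
      rcases eq_or_ne j ℓ with rfl | hj
      · simp only [hc, Pi.add_apply, Pi.single_eq_same]; omega
      · simpa [hc, Pi.single_eq_of_ne hj] using hnn j
    have hdeg : (fun j => (c j).toNat) = (fun j => (b j).toNat) + Pi.single ℓ 1 := by
      funext j
      rcases eq_or_ne j ℓ with rfl | hj
      · simp only [hc, Pi.add_apply, Pi.single_eq_same]; omega
      · simp [hc, Pi.single_eq_of_ne hj]
    have hbij := hsf (fun j => (b j).toNat) (Pi.single ℓ 1) fun j hj => by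
      rcases eq_or_ne j ℓ with rfl | hne
      · omega
      · simp [Pi.single_eq_of_ne hne] at hj
    rw [mon_single, ← hdeg, ← degZ_pos M hnn, ← degZ_pos M hnn'] at hbij
    constructor
    · intro x y hxy
      exact Subtype.ext (hbij.injOn x.2 y.2 (congrArg Subtype.val hxy))
    · intro z
      obtain ⟨x, hx, hxz⟩ := hbij.surjOn z.2
      exact ⟨⟨x, hx⟩, Subtype.ext hxz⟩
  · push Not at hnn
    obtain ⟨j, hj⟩ := hnn
    have hjℓ : j ≠ ℓ := by rintro rfl; omega
    have := subsingleton_degZ M hj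
    have := subsingleton_degZ M (a := c) (j := j) (by simpa [hc, Pi.single_eq_of_ne hjℓ])
    exact ⟨Function.injective_of_subsingleton _, fun z => ⟨0, Subsingleton.elim _ _⟩⟩

/-- The component of a Koszul chain at an arbitrary subset, `0` when the cardinality is wrong:
this frees the computations below from cardinality proofs. -/
def zcoeff {i : ℕ} (y : zSpace M a i) (F : Finset ι) : M.carrier :=
  if h : F.card = i then y ⟨F, h⟩ else 0

@[simp]
lemma zcoeff_val {i : ℕ} (y : zSpace M a i) (E : zIdx ι i) : zcoeff M y E.1 = y E :=
  dif_pos E.2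

lemma zcoeff_zd {i : ℕ} (y : zSpace M a (i + 1)) {F : Finset ι} (hF : F.card = i) :
    zcoeff M (zd M a i y) F =
      ∑ ℓ ∈ Fᶜ, ksign F ℓ • (X ℓ : MvPolynomial ι k) • zcoeff M y (insert ℓ F) := by
  rw [zcoeff, dif_pos hF, zd, LinearMap.pi_apply, LinearMap.sum_apply,
    AddSubmonoidClass.coe_finsetSum, ← Finset.sum_attach Fᶜ]
  refine Finset.sum_congr rfl fun ℓ _ => ?_
  rw [zcoeff, dif_pos (by rw [Finset.card_insert_of_notMem (Finset.mem_compl.1 ℓ.2), hF])]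
  rfl

lemma sub_chiZ_erase {E : Finset ι} {j : ι} (h : j ∈ E) (a : ι → ℤ) :
    a - chiZ (E.erase j) = (a - chiZ E) + Pi.single j 1 := by
  funext j'
  rcases eq_or_ne j' j with rfl | hj
  · simp [chiZ, h]
  · simp [chiZ, hj]

lemma one_le_sub_chiZ {E : Finset ι} {j : ι} (h : j ∈ E) (h2 : 2 ≤ a j) :
    1 ≤ (a - chiZ E) j := by
  simp only [Pi.sub_apply, chiZ, if_pos h]
  omega

def multZtoInv (hsf : M.IsSquarefree) {ℓ : ι} {b c : ι → ℤ} (hc : c = b + Pi.single ℓ 1)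
    (hb : 1 ≤ b ℓ) : degZ M c →ₗ[k] degZ M b :=
  (LinearEquiv.ofBijective _ (multZto_bijective M hsf hc hb)).symm.toLinearMap

lemma X_smul_multZtoInv (hsf : M.IsSquarefree) {ℓ : ι} {b c : ι → ℤ}
    (hc : c = b + Pi.single ℓ 1) (hb : 1 ≤ b ℓ) (z : degZ M c) :
    (X ℓ : MvPolynomial ι k) • (multZtoInv M hsf hc hb z : M.carrier) = z :=
  congrArg Subtype.val
    ((LinearEquiv.ofBijective _ (multZto_bijective M hsf hc hb)).apply_symm_apply z)

def koszulHomotopy (hsf : M.IsSquarefree) (a : ι → ℤ) {j : ι} (h2 : 2 ≤ a j) (i : ℕ) :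
    zSpace M a i →ₗ[k] zSpace M a (i + 1) :=
  LinearMap.pi fun E =>
    if h : j ∈ E.1 then
      ksign (E.1.erase j) j •
        (multZtoInv M hsf (sub_chiZ_erase h a) (one_le_sub_chiZ h h2)).comp
          (LinearMap.proj (φ := fun E : zIdx ι i => ↥(degZ M (a - chiZ E.1)))
            ⟨E.1.erase j, by rw [Finset.card_erase_of_mem h, E.2]; rfl⟩)
    else 0

section koszulHomotopy

variable (hsf : M.IsSquarefree) {j : ι} (h2 : 2 ≤ a j) {i : ℕ}

lemma koszulHomotopy_apply_of_notMem (y : zSpace M a i) {E : zIdx ι (i + 1)} (hj : j ∉ E.1) :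
    koszulHomotopy M hsf a h2 i y E = 0 := by
  rw [koszulHomotopy, LinearMap.pi_apply, dif_neg hj, LinearMap.zero_apply]

lemma zcoeff_koszulHomotopy_of_notMem (y : zSpace M a i) {F : Finset ι} (hj : j ∉ F) :
    zcoeff M (koszulHomotopy M hsf a h2 i y) F = 0 := by
  rw [zcoeff]
  split_ifs with hF
  · rw [koszulHomotopy_apply_of_notMem M hsf h2 y (E := ⟨F, hF⟩) hj, ZeroMemClass.coe_zero]
  · rfl

lemma X_smul_zcoeff_koszulHomotopy (y : zSpace M a i) {F : Finset ι} (hj : j ∈ F) :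
    (X j : MvPolynomial ι k) • zcoeff M (koszulHomotopy M hsf a h2 i y) F =
      ksign (F.erase j) j • zcoeff M y (F.erase j) := by
  by_cases hF : F.card = i + 1
  · have hF' : (F.erase j).card = i := by rw [Finset.card_erase_of_mem hj, hF]; rfl
    rw [zcoeff, zcoeff, dif_pos hF, dif_pos hF', koszulHomotopy, LinearMap.pi_apply, dif_pos hj]
    rw [← X_smul_multZtoInv M hsf (sub_chiZ_erase hj a) (one_le_sub_chiZ hj h2)]
    rw [LinearMap.smul_apply, AddSubgroupClass.coe_zsmul, smul_comm]
    rfl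
  · have hF' : (F.erase j).card ≠ i := by
      have := Finset.card_pos.2 ⟨j, hj⟩
      rw [Finset.card_erase_of_mem hj]; omega
    rw [zcoeff, zcoeff, dif_neg hF, dif_neg hF', smul_zero, smul_zero]

lemma zd_koszulHomotopy_apply_of_notMem (y : zSpace M a i) (E : zIdx ι i) (hj : j ∉ E.1) :
    zd M a i (koszulHomotopy M hsf a h2 i y) E = y E := by
  apply Subtype.ext
  rw [← zcoeff_val, ← zcoeff_val, zcoeff_zd M _ E.2,
    Finset.sum_eq_single_of_mem j (Finset.mem_compl.2 hj)]
  · rw [X_smul_zcoeff_koszulHomotopy M hsf h2 y (Finset.mem_insert_self j E.1),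
      Finset.erase_insert hj, smul_smul, ksign_mul_self, one_smul]
  · intro ℓ _ hℓ
    rw [zcoeff_koszulHomotopy_of_notMem M hsf h2 y (by simp [hj, Ne.symm hℓ]), smul_zero,
      smul_zero]

lemma zd_koszulHomotopy_add_apply_of_mem (y : zSpace M a (i + 1)) (E : zIdx ι (i + 1))
    (hj : j ∈ E.1) :
    zd M a (i + 1) (koszulHomotopy M hsf a h2 (i + 1) y) E +
      koszulHomotopy M hsf a h2 i (zd M a i y) E = y E := by
  set A := E.1.erase j
  have hA : A.card = i := by rw [Finset.card_erase_of_mem hj, E.2]; rfl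
  -- After multiplying by `x_j`, the terms `ℓ ∉ E` of `d s y` and `s d y` cancel by the sign
  -- rule, and the remaining term `ℓ = j` of `s d y` is `x_j y_E`.
  set T := ∑ ℓ ∈ E.1ᶜ, ksign A ℓ • (X ℓ : MvPolynomial ι k) • zcoeff M y (insert ℓ A)
  have hdh : (X j : MvPolynomial ι k) •
      zcoeff M (zd M a (i + 1) (koszulHomotopy M hsf a h2 (i + 1) y)) E.1 = -(ksign A j • T) := by
    rw [zcoeff_zd M _ E.2, Finset.smul_sum, Finset.smul_sum, ← Finset.sum_neg_distrib]
    refine Finset.sum_congr rfl fun ℓ hℓ => ?_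
    have hℓE : ℓ ∉ E.1 := Finset.mem_compl.1 hℓ
    have hℓj : ℓ ≠ j := fun h => hℓE (h ▸ hj)
    have hsign : ksign E.1 ℓ * ksign (insert ℓ A) j = -(ksign A j * ksign A ℓ) := by
      rw [← ksign_insert_mul_ksign_insert (Finset.notMem_erase j E.1)
        (fun h => hℓE (Finset.mem_of_mem_erase h)) hℓj, Finset.insert_erase hj]
    rw [smul_comm (X j : MvPolynomial ι k), smul_comm (X j : MvPolynomial ι k),
      X_smul_zcoeff_koszulHomotopy M hsf h2 y (Finset.mem_insert_of_mem hj),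
      Finset.erase_insert_of_ne hℓj, smul_comm (X ℓ : MvPolynomial ι k), smul_smul, hsign,
      smul_smul, neg_smul]
  have hhd : (X j : MvPolynomial ι k) • zcoeff M (koszulHomotopy M hsf a h2 i (zd M a i y)) E.1 =
      (X j : MvPolynomial ι k) • zcoeff M y E.1 + ksign A j • T := by
    rw [X_smul_zcoeff_koszulHomotopy M hsf h2 _ hj, zcoeff_zd M y hA, Finset.compl_erase,
      Finset.sum_insert (by simp [hj]), Finset.insert_erase hj, smul_add, smul_smul,
      ksign_mul_self, one_smul]
  apply (multZto_bijective M hsf (sub_chiZ_erase hj a) (one_le_sub_chiZ hj h2)).1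
  apply Subtype.ext
  rw [coe_multZto, coe_multZto, Submodule.coe_add, ← zcoeff_val, ← zcoeff_val, ← zcoeff_val,
    smul_add, hdh, hhd]
  abel

lemma zd_koszulHomotopy_zero (y : zSpace M a 0) :
    zd M a 0 (koszulHomotopy M hsf a h2 0 y) = y :=
  funext fun E =>
    zd_koszulHomotopy_apply_of_notMem M hsf h2 y E (by simp [Finset.card_eq_zero.1 E.2])

lemma zd_koszulHomotopy_add (y : zSpace M a (i + 1)) :
    zd M a (i + 1) (koszulHomotopy M hsf a h2 (i + 1) y) +
      koszulHomotopy M hsf a h2 i (zd M a i y) = y := by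
  funext E
  by_cases hj : j ∈ E.1
  · exact zd_koszulHomotopy_add_apply_of_mem M hsf h2 y E hj
  · rw [Pi.add_apply, koszulHomotopy_apply_of_notMem M hsf h2 _ hj, add_zero]
    exact zd_koszulHomotopy_apply_of_notMem M hsf h2 y E hj

end koszulHomotopy

lemma bettiZ_eq_zero_of_homotopy (s : ∀ i, zSpace M a i →ₗ[k] zSpace M a (i + 1))
    (h0 : ∀ y, zd M a 0 (s 0 y) = y)
    (hs : ∀ i y, zd M a (i + 1) (s (i + 1) y) + s i (zd M a i y) = y) (i : ℕ) :
    M.bettiZ i a = 0 := by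
  have hle : zcycles M a i ≤ LinearMap.range (zd M a i) := by
    cases i with
    | zero => exact fun y _ => ⟨s 0 y, h0 y⟩
    | succ i =>
      intro y hy
      refine ⟨s (i + 1) y, ?_⟩
      simpa [LinearMap.mem_ker.1 hy] using hs i y
  rw [bettiZ, Submodule.comap_subtype_eq_top.2 hle]
  exact Module.finrank_zero_of_subsingleton

lemma bettiZ_eq_zero_of_two_le (hsf : M.IsSquarefree) (i : ℕ) {j : ι} (h2 : 2 ≤ a j) :
    M.bettiZ i a = 0 :=
  bettiZ_eq_zero_of_homotopy M (koszulHomotopy M hsf a h2) (zd_koszulHomotopy_zero M hsf h2)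
    (fun _ => zd_koszulHomotopy_add M hsf h2) i

lemma bettiZ_eq_zero_of_neg (i : ℕ) {j : ι} (hj : a j < 0) : M.bettiZ i a = 0 := by
  have (E : zIdx ι i) : Subsingleton (degZ M (a - chiZ E.1)) :=
    subsingleton_degZ M (j := j) (by simp only [Pi.sub_apply, chiZ]; split_ifs <;> omega)
  rw [bettiZ]
  exact Module.finrank_zero_of_subsingleton

end GradedMod

theorem betti_degrees_squarefree
    {k : Type} [Field k] {n : ℕ} (M : GradedMod k (Fin n)) (hsf : M.IsSquarefree)
    (i : ℕ) (a : Fin n → ℤ) (h : M.bettiZ i a ≠ 0) :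
    ∀ j, a j = 0 ∨ a j = 1 := by
  intro j
  by_contra! hj
  rcases lt_or_ge (a j) 0 with hneg | hnonneg
  · exact h (M.bettiZ_eq_zero_of_neg i hneg)
  · exact h (M.bettiZ_eq_zero_of_two_le hsf i (j := j) (by omega))
end
end

section
/- Let M be a Cohen–Macaulay squarefree module of dimension d over S = k[x₁,…,xₙ], and l ≥ 2. Then M is l-Cohen–Macaulay (i.e., for every W ⊆ [n] with #W < l, the restriction M|_{−W} := M|_{[n]∖W} is either zero or Cohen–Macaulay of dimension d) if and only if β_{i,F}^S(M) = 0 for all F ⊆ [n] and i ∈ ℕ with i > n − d − l + 1 and #F < i + d. -/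
open MvPolynomial Finset
open scoped Classical
set_option linter.unusedSectionVars false
set_option maxHeartbeats 1000000
set_option synthInstance.maxHeartbeats 400000

noncomputable section

/-
Betti numbers are read off the degree-`F` strands of the Koszul complex, and these involve only
the variables in `F`; so for `F ⊆ V` the Betti number `β_{i,F}` of the restriction `M|_V` is
`β_{i,F}(M)`. Both directions then reduce to counting: for `⇒` take `W ⊆ [n] ∖ F` as large as
`#W < l` allows, for `⇐` the hypothesis gives `β_{i,F}(M|_{-W}) = 0` whenever
`i > #([n] ∖ W) - d`. What is left is that such a restriction is zero as soon as it has no nonzero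
piece of size `≥ d`. Adjoining a variable `x_g` turns the Koszul complex into the mapping cone of
`x_g`, so exactness of the strands `(F', F')` propagates to all strands `(U, F)` with `U ⊆ F`; in
the top degree `#U` exactness kills `M_{F ∖ U}` once the larger pieces vanish, and a downward
induction on the size of the pieces finishes.
-/

namespace GradedMod
open CombSqMod
variable {k : Type} [Field k] {ι : Type} [Fintype ι] [DecidableEq ι]

lemma mon_smul_mem_deg (M : GradedMod k ι) {a : ι → ℕ} {x : M.carrier} (hx : x ∈ M.deg a)
    (b : ι → ℕ) : mon k b • x ∈ M.deg (a + b) :=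
  M.mon_smul_mem _ b a rfl x hx

lemma monomial_smul_eq_smul_mon (M : GradedMod k ι) (m : ι →₀ ℕ) (c : k) (x : M.carrier) :
    monomial m c • x = c • mon k m • x := by
  rw [monomial_eq, Finsupp.prod_pow, mul_smul, ← algebraMap_eq, IsScalarTower.algebraMap_smul]
  rfl

theorem finiteDimensional_deg (M : GradedMod k ι) (a : ι → ℕ) :
    FiniteDimensional k (M.deg a) := by
  let _ := M.internal.chooseDecomposition
  let π : M.carrier →ₗ[k] M.carrier := (M.deg a).subtype ∘ₗ
    DirectSum.component k (ι → ℕ) (fun e => M.deg e) a ∘ₗ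
      (DirectSum.decomposeLinearEquiv M.deg).toLinearMap
  have hπ : ∀ x, π x = DirectSum.decompose M.deg x a := fun _ => rfl
  obtain ⟨G, hG⟩ := M.finite.fg_top
  -- a homogeneous element of degree `a` in the `S`-span of `G` is a `k`-combination of the
  -- elements `x^(a - e) g_e`, where `g_e` runs over the homogeneous components of the generators
  let T : Finset M.carrier := (G ×ˢ Iic a).image fun p =>
    mon k (a - p.2) • (DirectSum.decompose M.deg p.1 p.2 : M.carrier)
  have hT : ∀ g ∈ G, ∀ e (m : ι → ℕ),
      π (mon k m • (DirectSum.decompose M.deg g e : M.carrier)) ∈ Submodule.span k (T : Set _) := by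
    intro g hg e m
    have hmem := M.mon_smul_mem_deg (DirectSum.decompose M.deg g e).2 m
    by_cases hea : e + m = a
    · rw [hπ, DirectSum.decompose_of_mem_same M.deg (hea ▸ hmem)]
      refine Submodule.subset_span (mem_image.mpr ⟨(g, e), ?_, ?_⟩)
      · exact mem_product.mpr ⟨hg, mem_Iic.mpr (hea ▸ le_self_add)⟩
      · rw [← hea, add_tsub_cancel_left]
    · rw [hπ, DirectSum.decompose_of_mem_ne M.deg hmem hea]
      exact Submodule.zero_mem _
  have hspan : ∀ x, x ∈ (Submodule.span k (T : Set _)).comap π := by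
    intro x
    obtain ⟨f, -, rfl⟩ := Submodule.mem_span_finset.mp (hG ▸ Submodule.mem_top (x := x))
    refine Submodule.sum_mem _ fun g hg => ?_
    nth_rw 2 [← DirectSum.sum_support_decompose M.deg g]
    rw [smul_sum]
    refine Submodule.sum_mem _ fun e _ => ?_
    rw [(f g).as_sum, sum_smul]
    refine Submodule.sum_mem _ fun m _ => ?_
    rw [monomial_smul_eq_smul_mon]
    exact Submodule.smul_mem _ _ (hT g hg e m)
  refine Submodule.finiteDimensional_of_le (S₂ := Submodule.span k (T : Set _)) fun x hx => ?_
  rw [← DirectSum.decompose_of_mem_same M.deg hx, ← hπ]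
  exact hspan x

variable {M : GradedMod k ι} {W F : Finset ι} {j : ℕ}

instance (F : Finset ι) : FiniteDimensional k (M.toComb.piece F) := M.finiteDimensional_deg (chi F)

lemma mon_chi_singleton (ℓ : ι) : mon k (chi ({ℓ} : Finset ι)) = X ℓ := by
  rw [← mon_single]
  congr
  funext j
  by_cases hj : j = ℓ <;> simp [chi, hj]

def pieceVal (F : Finset ι) : M.toComb.piece F →ₗ[k] M.carrier := (M.deg (chi F)).subtype

lemma pieceVal_mem (x : M.toComb.piece F) : pieceVal F x ∈ M.deg (chi F) := x.2

lemma pieceVal_injective : Function.Injective (pieceVal (M := M) F) := Subtype.val_injective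

lemma pieceVal_mult {G : Finset ι} (h : G ⊆ F) (x : M.toComb.piece G) :
    pieceVal F (M.toComb.mult G F h x) = mon k (chi (F \ G)) • pieceVal G x := rfl

def entry (y : kSpace M.toComb W F j) (E : Finset ι) : M.carrier :=
  if h : E ⊆ W ∧ E ⊆ F ∧ E.card = j then pieceVal _ (y ⟨E, h⟩) else 0

lemma entry_apply (y : kSpace M.toComb W F j) (E : kIdx W F j) :
    entry y E.1 = pieceVal _ (y E) := by
  rw [entry, dif_pos E.2]

lemma entry_of_not_subset (y : kSpace M.toComb W F j) {E : Finset ι} (hE : ¬E ⊆ W) :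
    entry y E = 0 :=
  dif_neg fun h => hE h.1

lemma entry_mem (y : kSpace M.toComb W F j) (E : Finset ι) :
    entry y E ∈ M.deg (chi (F \ E)) := by
  unfold entry
  split_ifs with h
  · exact pieceVal_mem _
  · exact zero_mem _

lemma ext_entry {y y' : kSpace M.toComb W F j}
    (h : ∀ E : kIdx W F j, entry y E.1 = entry y' E.1) : y = y' :=
  funext fun E => pieceVal_injective (by simpa only [entry_apply] using h E)

@[simp] lemma entry_zero (E : Finset ι) : entry (0 : kSpace M.toComb W F j) E = 0 := by
  unfold entry; split_ifs <;> simp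

@[simp] lemma entry_add (y y' : kSpace M.toComb W F j) (E : Finset ι) :
    entry (y + y') E = entry y E + entry y' E := by
  unfold entry; split_ifs <;> simp

@[simp] lemma entry_neg (y : kSpace M.toComb W F j) (E : Finset ι) :
    entry (-y) E = -entry y E := by
  unfold entry; split_ifs <;> simp

def ofEntry (W F : Finset ι) (j : ℕ) (f : Finset ι → M.carrier)
    (hf : ∀ E : kIdx W F j, f E.1 ∈ M.deg (chi (F \ E.1))) : kSpace M.toComb W F j :=
  fun E => (⟨f E.1, hf E⟩ : M.deg (chi (F \ E.1)))

lemma entry_ofEntry (f : Finset ι → M.carrier)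
    (hf : ∀ E : kIdx W F j, f E.1 ∈ M.deg (chi (F \ E.1))) (E : kIdx W F j) :
    entry (ofEntry W F j f hf) E.1 = f E.1 := by
  rw [entry_apply]; rfl

lemma insert_mem_kIdx (E : kIdx W F j) {ℓ : ι} (hℓ : ℓ ∈ (F ∩ W) \ E.1) :
    insert ℓ E.1 ⊆ W ∧ insert ℓ E.1 ⊆ F ∧ (insert ℓ E.1).card = j + 1 := by
  obtain ⟨hℓFW, hℓE⟩ := mem_sdiff.mp hℓ
  exact ⟨insert_subset (mem_inter.mp hℓFW).2 E.2.1,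
    insert_subset (mem_inter.mp hℓFW).1 E.2.2.1, by rw [card_insert_of_notMem hℓE, E.2.2.2]⟩

lemma entry_kd (y : kSpace M.toComb W F (j + 1)) (E : kIdx W F j) :
    entry (kd M.toComb W F j y) E.1 =
      ∑ ℓ ∈ (F ∩ W) \ E.1, ksign E.1 ℓ • (X ℓ : MvPolynomial ι k) • entry y (insert ℓ E.1) := by
  rw [← sum_attach, entry_apply, kd, LinearMap.pi_apply, LinearMap.sum_apply, map_sum]
  refine sum_congr rfl fun ℓ _ => ?_
  have hℓ := mem_sdiff.mp ℓ.2
  have hmon : mon k (chi ((F \ E.1) \ (F \ insert ℓ.1 E.1))) = X ℓ.1 := by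
    rw [sdiff_insert, sdiff_erase_self (mem_sdiff.mpr ⟨(mem_inter.mp hℓ.1).1, hℓ.2⟩),
      mon_chi_singleton]
  rw [LinearMap.smul_apply, LinearMap.comp_apply, LinearMap.proj_apply, map_zsmul, pieceVal_mult,
    hmon, entry_apply y ⟨_, insert_mem_kIdx E ℓ.2⟩]

def transport (W' : Finset ι) (y : kSpace M.toComb W F j) : kSpace M.toComb W' F j :=
  ofEntry W' F j (entry y) fun E => entry_mem y E.1

lemma entry_transport {W' : Finset ι} (y : kSpace M.toComb W F j) {E : Finset ι}
    (hE : E ⊆ W') : entry (transport W' y) E = entry y E := by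
  by_cases hE' : E ⊆ W' ∧ E ⊆ F ∧ E.card = j
  · exact entry_ofEntry _ _ ⟨E, hE'⟩
  · rw [entry, dif_neg hE', entry, dif_neg fun h => hE' ⟨hE, h.2⟩]

lemma kd_transport {W' : Finset ι} (h : F ∩ W ⊆ W') (y : kSpace M.toComb W F (j + 1)) :
    kd M.toComb W' F j (transport W' y) = transport W' (kd M.toComb W F j y) := by
  refine ext_entry fun E => ?_
  rw [entry_kd, entry_transport _ E.2.1]
  rw [sum_congr rfl fun ℓ hℓ => by rw [entry_transport y (insert_mem_kIdx E hℓ).1]]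
  by_cases hEW : E.1 ⊆ W
  · rw [entry_kd y ⟨E.1, hEW, E.2.2⟩]
    refine (sum_subset (sdiff_subset_sdiff (subset_inter inter_subset_left h) subset_rfl)
      fun ℓ _ hℓ => ?_).symm
    have hℓW : ℓ ∉ W := fun hℓW => hℓ (by grind)
    rw [entry_of_not_subset y fun hs => hℓW (hs (mem_insert_self ℓ E.1)), smul_zero, smul_zero]
  · rw [entry_of_not_subset _ hEW]
    refine sum_eq_zero fun ℓ _ => ?_
    rw [entry_of_not_subset y fun hs => hEW ((subset_insert ℓ E.1).trans hs), smul_zero,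
      smul_zero]

lemma transport_zero (W' : Finset ι) : transport W' (0 : kSpace M.toComb W F j) = 0 :=
  ext_entry fun E => by rw [entry_transport _ E.2.1, entry_zero, entry_zero]

lemma transport_mem_kcycles {W' : Finset ι} (h : F ∩ W ⊆ W') {i : ℕ}
    {y : kSpace M.toComb W F i} (hy : y ∈ kcycles M.toComb W F i) :
    transport W' y ∈ kcycles M.toComb W' F i := by
  cases i with
  | zero => trivial
  | succ j =>
    show kd M.toComb W' F j (transport W' y) = 0
    rw [kd_transport h, show kd M.toComb W F j y = 0 from hy, transport_zero]

lemma transport_transport {W' : Finset ι} (h : F ∩ W ⊆ W') (y : kSpace M.toComb W F j) :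
    transport W (transport W' y) = y :=
  ext_entry fun E => by
    rw [entry_transport _ E.2.1,
      entry_transport _ fun a ha => h (mem_inter.mpr ⟨E.2.2.1 ha, E.2.1 ha⟩)]

def ExactAt (M : GradedMod k ι) (W F : Finset ι) (i : ℕ) : Prop :=
  kcycles M.toComb W F i ≤ LinearMap.range (kd M.toComb W F i)

lemma ExactAt.of_inter_eq {W' : Finset ι} {i : ℕ} (h : F ∩ W = F ∩ W')
    (hW : ExactAt M W F i) : ExactAt M W' F i := by
  intro z hz
  obtain ⟨η, hη⟩ := hW (transport_mem_kcycles (h.ge.trans inter_subset_right) hz)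
  refine ⟨transport W' η, ?_⟩
  rw [kd_transport (h.le.trans inter_subset_right), hη,
    transport_transport (h.ge.trans inter_subset_right)]

lemma exactAt_congr {W' : Finset ι} {i : ℕ} (h : F ∩ W = F ∩ W') :
    ExactAt M W F i ↔ ExactAt M W' F i :=
  ⟨.of_inter_eq h, .of_inter_eq h.symm⟩

lemma bettiNum_eq_zero_iff {i : ℕ} : bettiNum M.toComb W i F = 0 ↔ ExactAt M W F i := by
  rw [bettiNum, Module.finrank_zero_iff, Submodule.Quotient.subsingleton_iff,
    Submodule.comap_subtype_eq_top, ExactAt]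

lemma bettiNum_eq_zero_iff_betti_eq_zero {i : ℕ} (hF : F ⊆ W) :
    bettiNum M.toComb W i F = 0 ↔ M.betti i F = 0 := by
  rw [betti, bettiNum_eq_zero_iff, bettiNum_eq_zero_iff, exactAt_congr]
  rw [inter_univ, inter_eq_left.mpr hF]

lemma betti_eq_zero_iff_exactAt_self {i : ℕ} : M.betti i F = 0 ↔ ExactAt M F F i := by
  rw [betti, bettiNum_eq_zero_iff, exactAt_congr]
  rw [inter_univ, inter_self]

lemma betti_eq_zero_of_subsingleton {i : ℕ} (h : ∀ G ⊆ F, Subsingleton (M.toComb.piece G)) :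
    M.betti i F = 0 := by
  have : ∀ E : kIdx univ F i, Subsingleton (M.toComb.piece (F \ E.1)) :=
    fun E => h _ sdiff_subset
  rw [betti, bettiNum_eq_zero_iff]
  exact fun z _ => ⟨0, Subsingleton.elim _ _⟩

lemma ksign_insert {ℓ : ι} {E : Finset ι} (hℓ : ℓ ∉ E) (g : ι) :
    ksign (insert ℓ E) g =
      (if Fintype.equivFin ι ℓ < Fintype.equivFin ι g then -1 else 1) * ksign E g := by
  unfold ksign
  rw [filter_insert]
  split_ifs with h
  · rw [card_insert_of_notMem fun h' => hℓ (mem_filter.mp h').1, pow_succ, mul_comm]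
  · rw [one_mul]

lemma ksign_insert_mul_ksign {g ℓ : ι} {E : Finset ι} (hgℓ : g ≠ ℓ) (hg : g ∉ E)
    (hℓ : ℓ ∉ E) : ksign (insert ℓ E) g * ksign E ℓ = -(ksign (insert g E) ℓ * ksign E g) := by
  have hne := (Fintype.equivFin ι).injective.ne hgℓ
  rw [ksign_insert hℓ, ksign_insert hg]
  rcases hne.lt_or_gt with h | h
  · rw [if_neg (asymm h), if_pos h]; ring
  · rw [if_pos h, if_neg (asymm h)]; ring

variable {U : Finset ι} {g : ι}

def contract (g : ι) (η : kSpace M.toComb (insert g U) F (j + 1)) :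
    kSpace M.toComb U (F.erase g) j :=
  ofEntry U (F.erase g) j (fun E => ksign E g • entry η (insert g E)) fun E => by
    rw [erase_sdiff_comm, ← sdiff_insert]
    exact zsmul_mem (entry_mem η _) _

lemma entry_contract (η : kSpace M.toComb (insert g U) F (j + 1)) (E : kIdx U (F.erase g) j) :
    entry (contract g η) E.1 = ksign E.1 g • entry η (insert g E.1) :=
  entry_ofEntry _ _ E

def mulVar (hgF : g ∈ F) (hgU : g ∉ U) (α : kSpace M.toComb U (F.erase g) j) :
    kSpace M.toComb U F j :=
  ofEntry U F j (fun E => (X g : MvPolynomial ι k) • entry α E) fun E => by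
    have hgE : g ∉ E.1 := fun h => hgU (E.2.1 h)
    have hF : F \ E.1 = insert g ((F.erase g) \ E.1) := by grind
    rw [hF, chi_insert (by simp)]
    exact M.mul_mem g _ _ (entry_mem α _)

lemma entry_mulVar (hgF : g ∈ F) (hgU : g ∉ U) (α : kSpace M.toComb U (F.erase g) j)
    (E : kIdx U F j) : entry (mulVar hgF hgU α) E.1 = (X g : MvPolynomial ι k) • entry α E.1 :=
  entry_ofEntry _ _ E

lemma kd_mulVar (hgF : g ∈ F) (hgU : g ∉ U) (α : kSpace M.toComb U (F.erase g) (j + 1)) :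
    kd M.toComb U F j (mulVar hgF hgU α) = mulVar hgF hgU (kd M.toComb U (F.erase g) j α) := by
  refine ext_entry fun E => ?_
  have hE : E.1 ⊆ U ∧ E.1 ⊆ F.erase g ∧ E.1.card = j :=
    ⟨E.2.1, subset_erase.mpr ⟨E.2.2.1, fun h => hgU (E.2.1 h)⟩, E.2.2.2⟩
  rw [entry_kd, entry_mulVar, entry_kd α ⟨E.1, hE⟩, erase_inter, erase_sdiff_comm,
    erase_eq_of_notMem fun h => hgU (mem_inter.mp (mem_sdiff.mp h).1).2, smul_sum]
  refine sum_congr rfl fun ℓ hℓ => ?_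
  rw [entry_mulVar hgF hgU α ⟨_, insert_mem_kIdx E hℓ⟩, smul_comm (X g : MvPolynomial ι k),
    smul_smul, mul_comm, ← smul_smul]

lemma kd_contract (hgF : g ∈ F) (hgU : g ∉ U)
    (η : kSpace M.toComb (insert g U) F (j + 1 + 1)) :
    kd M.toComb U (F.erase g) j (contract g η) =
      -contract g (kd M.toComb (insert g U) F (j + 1) η) := by
  refine ext_entry fun E => ?_
  have hgE : g ∉ E.1 := fun h => hgU (E.2.1 h)
  have hE : insert g E.1 ⊆ insert g U ∧ insert g E.1 ⊆ F ∧ (insert g E.1).card = j + 1 :=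
    ⟨insert_subset_insert g E.2.1, insert_subset hgF (E.2.2.1.trans (erase_subset g F)),
      by rw [card_insert_of_notMem hgE, E.2.2.2]⟩
  have hidx : (F ∩ insert g U) \ insert g E.1 = (F.erase g ∩ U) \ E.1 := by grind
  rw [entry_kd, entry_neg, entry_contract, entry_kd η ⟨_, hE⟩, hidx, smul_sum,
    ← sum_neg_distrib]
  refine sum_congr rfl fun ℓ hℓ => ?_
  have hgℓ : g ≠ ℓ := by grind
  rw [entry_contract η ⟨_, insert_mem_kIdx E hℓ⟩, insert_comm,
    smul_comm (X ℓ : MvPolynomial ι k), smul_smul, smul_smul, ← neg_smul]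
  dsimp only
  rw [mul_comm (ksign E.1 ℓ), ksign_insert_mul_ksign hgℓ hgE (mem_sdiff.mp hℓ).2,
    mul_comm (ksign E.1 g)]

lemma entry_kd_insert_eq_add (hgF : g ∈ F) (hgU : g ∉ U)
    (η : kSpace M.toComb (insert g U) F (j + 1)) (E : kIdx U F j) :
    entry (kd M.toComb (insert g U) F j η) E.1 =
      entry (kd M.toComb U F j (transport U η)) E.1 +
        (X g : MvPolynomial ι k) • entry (contract g η) E.1 := by
  have hgE : g ∉ E.1 := fun h => hgU (E.2.1 h)
  have hE : E.1 ⊆ U ∧ E.1 ⊆ F.erase g ∧ E.1.card = j :=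
    ⟨E.2.1, subset_erase.mpr ⟨E.2.2.1, hgE⟩, E.2.2.2⟩
  have hidx : (F ∩ insert g U) \ E.1 = insert g ((F ∩ U) \ E.1) := by grind
  rw [entry_kd η ⟨E.1, E.2.1.trans (subset_insert g U), E.2.2⟩, entry_kd,
    entry_contract η ⟨_, hE⟩, hidx, sum_insert (by grind), add_comm,
    smul_comm (X g : MvPolynomial ι k)]
  congr 1
  exact sum_congr rfl fun ℓ hℓ => by rw [entry_transport η (insert_mem_kIdx E hℓ).1]

lemma contract_transport (hgU : g ∉ U) (z : kSpace M.toComb U F (j + 1)) :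
    contract g (transport (insert g U) z) = 0 :=
  ext_entry fun E => by
    rw [entry_contract, entry_transport _ (insert_subset_insert g E.2.1),
      entry_of_not_subset z fun h => hgU (h (mem_insert_self g E.1)), smul_zero, entry_zero]

/-- The Koszul complex on `insert g U` is the mapping cone of multiplication by `x_g` on the
Koszul complex on `U`; this is one segment of the resulting long exact sequence. -/
theorem ExactAt.of_erase_of_insert {i : ℕ} (hgF : g ∈ F) (hgU : g ∉ U)
    (hA : ExactAt M U (F.erase g) i) (hC : ExactAt M (insert g U) F i) : ExactAt M U F i := by
  intro z hz
  obtain ⟨η, hη⟩ :=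
    hC (transport_mem_kcycles (inter_subset_right.trans (subset_insert g U)) hz)
  have hcyc : contract g η ∈ kcycles M.toComb U (F.erase g) i := by
    cases i with
    | zero => trivial
    | succ j =>
      show kd _ _ _ _ _ = 0
      rw [kd_contract hgF hgU, hη, contract_transport hgU, neg_zero]
  obtain ⟨α, hα⟩ := hA hcyc
  refine ⟨transport U η + mulVar hgF hgU α, ext_entry fun E => ?_⟩
  rw [map_add, kd_mulVar, hα, entry_add, entry_mulVar, ← entry_kd_insert_eq_add hgF hgU, hη,
    entry_transport _ (E.2.1.trans (subset_insert g U))]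

theorem ExactAt.of_forall_subset {i : ℕ} (h : ∀ F' ⊆ F, ExactAt M F' F' i) (hUF : U ⊆ F) :
    ExactAt M U F i := by
  induction hn : (F \ U).card generalizing U F with
  | zero =>
    rw [card_eq_zero, sdiff_eq_empty_iff_subset] at hn
    exact subset_antisymm hUF hn ▸ h U hUF
  | succ n ih =>
    obtain ⟨g, hg⟩ := card_pos.mp (by omega : 0 < (F \ U).card)
    obtain ⟨hgF, hgU⟩ := mem_sdiff.mp hg
    refine .of_erase_of_insert hgF hgU ?_ ?_
    · refine ih (fun F' hF' => h F' (hF'.trans (erase_subset g F)))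
        (subset_erase.mpr ⟨hUF, hgU⟩) ?_
      rw [erase_sdiff_comm, card_erase_of_mem hg, hn, Nat.add_sub_cancel]
    · refine ih h (insert_subset hgF hUF) ?_
      rw [sdiff_insert, card_erase_of_mem hg, hn, Nat.add_sub_cancel]

/-- In the top homological degree `#U` the strand has no boundaries, and its cycles are the
elements of `M_{F ∖ U}` annihilated by every `x_ℓ`, `ℓ ∈ U`. -/
theorem subsingleton_piece_sdiff_of_exactAt (hUF : U ⊆ F) (hex : ExactAt M U F U.card)
    (hsub : ∀ E ⊂ U, Subsingleton (M.toComb.piece (F \ E))) :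
    Subsingleton (M.toComb.piece (F \ U)) := by
  obtain ⟨i, hi⟩ : ∃ i, U.card = i := ⟨_, rfl⟩
  rw [hi] at hex
  have hidx : ∀ E : kIdx U F i, E.1 = U := fun E =>
    eq_of_subset_of_card_le E.2.1 (by rw [E.2.2.2, hi])
  refine subsingleton_of_forall_eq 0 fun z => pieceVal_injective ?_
  let zU : kSpace M.toComb U F i :=
    ofEntry U F i (fun _ => pieceVal _ z) fun E => by rw [hidx E]; exact pieceVal_mem z
  have hcyc : zU ∈ kcycles M.toComb U F i := by
    cases i with
    | zero => trivial
    | succ j =>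
      refine funext fun E => @Subsingleton.elim _ (hsub E.1 ?_) _ _
      exact ssubset_of_subset_of_ne E.2.1 fun h => by have := E.2.2.2; rw [h] at this; omega
  obtain ⟨η, hη⟩ := hex hcyc
  have hη0 : η = 0 := funext fun E => absurd (card_le_card E.2.1) (by rw [E.2.2.2, hi]; omega)
  have hzU : entry zU U = pieceVal _ z := entry_ofEntry _ _ ⟨U, subset_rfl, hUF, hi⟩
  rw [← hzU, ← hη, hη0, map_zero, entry_zero, map_zero]

/-- The hypotheses say that `M|_V` has depth `≥ d` but dimension `< d`. -/
theorem isZeroOn_of_exactAt {V : Finset ι} {d : ℕ}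
    (hex : ∀ F ⊆ V, ∀ i : ℕ, (V.card : ℤ) - d < i → ExactAt M F F i)
    (hdim : ∀ P ⊆ V, d ≤ P.card → Subsingleton (M.toComb.piece P)) :
    IsZeroOn M.toComb V := by
  have hV : ∀ U ⊆ V, Subsingleton (M.toComb.piece (V \ U)) := by
    intro U
    induction U using Finset.strongInduction with
    | H U ih =>
      intro hUV
      by_cases hd : d ≤ (V \ U).card
      · exact hdim _ sdiff_subset hd
      · rw [card_sdiff_of_subset hUV] at hd
        have hUcard := card_le_card hUV
        refine subsingleton_piece_sdiff_of_exactAt hUV ?_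
          fun E hE => ih E hE (hE.subset.trans hUV)
        exact .of_forall_subset (fun F hF => hex F hF _ (by omega)) hUV
  intro P hP
  simpa only [Finset.sdiff_sdiff_eq_self hP] using hV (V \ P) sdiff_subset

lemma combDim_mono {W' : Finset ι} (h : W' ⊆ W) : combDim M.toComb W' ≤ combDim M.toComb W :=
  sup_mono (filter_subset_filter _ (powerset_mono.mpr h))

lemma card_le_combDim {P : Finset ι} (h : P ⊆ W) (hP : Nontrivial (M.toComb.piece P)) :
    P.card ≤ combDim M.toComb W :=
  le_sup (mem_filter.mpr ⟨mem_powerset.mpr h, hP⟩)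

theorem betti_eq_zero_of_lCM {l d : ℕ} (hl : 0 < l) (hM : M.lCM l) (hd : M.dim = d) {i : ℕ}
    {F : Finset ι} (hi : (Fintype.card ι : ℤ) - d - l + 1 < i) (hF : F.card < i + d) :
    M.betti i F = 0 := by
  obtain ⟨W, hWF, hW⟩ := exists_subset_card_eq (min_le_right (l - 1) Fᶜ.card)
  have hFW : F ⊆ Wᶜ := subset_compl_comm.mp hWF
  have hFc := card_compl F
  have hWc := card_compl W
  rcases hM W (by omega) with hzero | hcm
  · exact betti_eq_zero_of_subsingleton fun G hG => hzero G (hG.trans hFW)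
  · have hcard := card_le_card hFW
    refine (bettiNum_eq_zero_iff_betti_eq_zero hFW).mp (hcm.2 i F hFW ?_)
    rw [show combDim M.toComb univ = d from hd]
    omega

theorem lCM_of_betti_eq_zero {l d : ℕ} (hd : M.dim = d)
    (h : ∀ (i : ℕ) (F : Finset ι), (Fintype.card ι : ℤ) - d - l + 1 < i → F.card < i + d →
      M.betti i F = 0) : M.lCM l := by
  rw [dim] at hd
  intro W hW
  have hWc := card_compl W
  have hβ : ∀ F ⊆ Wᶜ, ∀ i : ℕ, (Wᶜ.card : ℤ) - d < i → M.betti i F = 0 :=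
    fun F hF i hi => h i F (by omega) (by have := card_le_card hF; omega)
  by_cases hP : ∃ P ⊆ Wᶜ, d ≤ P.card ∧ Nontrivial (M.toComb.piece P)
  · obtain ⟨P, hPW, hdP, hP⟩ := hP
    refine .inr ⟨le_antisymm (combDim_mono (subset_univ _)) ?_, fun i F hF hi => ?_⟩
    · exact hd ▸ hdP.trans (card_le_combDim hPW hP)
    · rw [hd] at hi
      exact (bettiNum_eq_zero_iff_betti_eq_zero hF).mpr (hβ F hF i hi)
  · push Not at hP
    exact .inl (isZeroOn_of_exactAt
      (fun F hF i hi => betti_eq_zero_iff_exactAt_self.mp (hβ F hF i hi)) hP)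

end GradedMod

theorem squarefree_lCM_iff_betti_vanishing_general
    {k : Type} [Field k] {n : ℕ} (M : GradedMod k (Fin n))
    (d : ℕ) (hCM : M.IsCMdim d) (l : ℕ) (hl : 2 ≤ l) :
    M.lCM l ↔
      ∀ (i : ℕ) (F : Finset (Fin n)),
        (n : ℤ) - d - l + 1 < (i : ℤ) → F.card < i + d → M.betti i F = 0 := by
  refine ⟨fun hM i F hi => GradedMod.betti_eq_zero_of_lCM (by omega) hM hCM.1 ?_, fun h =>
    GradedMod.lCM_of_betti_eq_zero hCM.1 fun i F hi => h i F ?_⟩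
  · simpa only [Fintype.card_fin] using hi
  · simpa only [Fintype.card_fin] using hi

theorem squarefree_lCM_iff_betti_vanishing
    {k : Type} [Field k] {n : ℕ} (M : GradedMod k (Fin n))
    (hsf : M.IsSquarefree) (d : ℕ) (hCM : M.IsCMdim d) (l : ℕ) (hl : 2 ≤ l) :
    M.lCM l ↔
      ∀ (i : ℕ) (F : Finset (Fin n)),
        (n : ℤ) - d - l + 1 < (i : ℤ) → F.card < i + d → M.betti i F = 0 :=
  squarefree_lCM_iff_betti_vanishing_general M d hCM l hl
end
end

section
/- Let P be the simplicial poset obtained by gluing two d-simplices along their boundaries (d ≥ 1). Then for every atom y of P, the restriction P|_{V∖{y}} has rank strictly less than rank P = d + 1; consequently P is not 2-Cohen–Macaulay, even though the underlying space of Γ(P) is the d-sphere. -/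
open MvPolynomial Finset
open scoped Classical
set_option linter.unusedSectionVars false
set_option maxHeartbeats 1000000
set_option synthInstance.maxHeartbeats 400000

noncomputable section

/-- The "Stanley–Reisner" combinatorial squarefree module of a simplicial complex `Δ` on
the vertex set `ι`: the piece at a face `F ∈ Δ` is `k`, and zero at non-faces; the
multiplication maps are identities between faces and zero otherwise. -/
def SRComb (k : Type) [Field k] {ι : Type} [Fintype ι] [DecidableEq ι]
    (Δ : Finset (Finset ι)) : CombSqMod k ι where
  piece F := ↥(if F ∈ Δ then (⊤ : Submodule k k) else ⊥)
  mult F G _hFG :=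
    { toFun := fun x => ⟨if G ∈ Δ then (x : k) else 0, by
        split_ifs with h <;> first | exact Submodule.mem_top | exact Submodule.zero_mem _⟩
      map_add' := fun x y => by
        ext
        simp only [Submodule.coe_add]
        split_ifs <;> simp
      map_smul' := fun c x => by
        ext
        simp only [RingHom.id_apply, SetLike.val_smul, smul_eq_mul]
        split_ifs <;> simp }

section Posets

variable {P : Type} [Fintype P] [PartialOrder P] [OrderBot P]

/-- A finite poset `P` with least element `0̂ = ⊥` is *simplicial* if every interval
`[0̂, x]` is isomorphic to a Boolean algebra. -/
def IsSimplicialPoset (P : Type) [Fintype P] [PartialOrder P] [OrderBot P] : Prop :=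
  ∀ x : P, ∃ m : ℕ, Nonempty ({y : P // y ≤ x} ≃o Finset (Fin m))

/-- The rank `ρ(x)`: the number of atoms below `x`. -/
def rho (x : P) : ℕ := (Finset.univ.filter fun y : P => IsAtom y ∧ y ≤ x).card

/-- The rank of a subposet `S ⊆ P` (for a simplicial poset: the maximum of `ρ` on `S`). -/
def posetRank (S : Set P) : ℕ :=
  (Finset.univ.filter fun x : P => x ∈ S).sup rho

/-- The order complex of `S ∖ {⊥}`: chains of nonbottom elements of `S`.  Its geometric
realization is the barycentric subdivision of the cell complex `Γ(P)` restricted to `S`. -/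
def orderComplex (S : Set P) : Finset (Finset P) :=
  Finset.univ.filter fun F : Finset P =>
    (∀ x ∈ F, x ∈ S ∧ x ≠ ⊥) ∧ ∀ x ∈ F, ∀ y ∈ F, x ≤ y ∨ y ≤ x

/-- A subposet `S` of a simplicial poset is *Cohen–Macaulay over `k`* if the
Stanley–Reisner module of (a simplicial decomposition of the cell complex `Γ`, namely) its
order complex is a Cohen–Macaulay module of dimension `rank S` over the polynomial ring
on the vertex set. -/
def IsCMPoset (k : Type) [Field k] (S : Set P) : Prop :=
  CombSqMod.IsCMon (SRComb k (orderComplex S)) Finset.univ (posetRank S)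

/-- The restriction `P|_{V∖W}` (inside `S`): elements all of whose atoms avoid `W`. -/
def restrictAway (S : Set P) (W : Finset P) : Set P :=
  {x | x ∈ S ∧ ∀ y : P, IsAtom y → y ≤ x → y ∉ W}

/-- `S` is `l`-Cohen–Macaulay over `k`: for every set `W` of at most `l − 1` atoms, the
restriction `S|_{V∖W}` is Cohen–Macaulay of the same rank as `S`. -/
def IslCMPoset (k : Type) [Field k] (S : Set P) (l : ℕ) : Prop :=
  ∀ W : Finset P, (↑W ⊆ {y : P | IsAtom y ∧ y ∈ S}) → W.card < l →
    IsCMPoset k (restrictAway S W) ∧ posetRank (restrictAway S W) = posetRank S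

lemma rho_lt_card_atoms {x y : P} (hy : IsAtom y) (hyx : ¬ y ≤ x) :
    rho x < (Finset.univ.filter fun z : P => IsAtom z).card := by
  refine Finset.card_lt_card ⟨fun z hz => ?_, fun hsub => hyx ?_⟩
  · simp only [Finset.mem_filter, Finset.mem_univ, true_and] at hz ⊢
    exact hz.1
  · exact (Finset.mem_filter.mp (hsub (by simpa using hy))).2.2

lemma posetRank_restrictAway_singleton_lt (S : Set P) {y : P} (hy : IsAtom y) :
    posetRank (restrictAway S {y}) < (Finset.univ.filter fun z : P => IsAtom z).card := by
  refine (Finset.sup_lt_iff (Finset.card_pos.mpr ⟨y, by simpa using hy⟩)).mpr fun x hx => ?_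
  simp only [Finset.mem_filter, Finset.mem_univ, true_and] at hx
  exact rho_lt_card_atoms hy fun hyx => hx.2 y hy hyx (Finset.mem_singleton_self y)

lemma IslCMPoset.posetRank_restrictAway_singleton {k : Type} [Field k] {S : Set P} {l : ℕ}
    (h : IslCMPoset k S l) (hl : 2 ≤ l) {y : P} (hy : IsAtom y) (hyS : y ∈ S) :
    posetRank (restrictAway S {y}) = posetRank S :=
  (h {y} (by simpa using And.intro hy hyS) (by simpa using hl.trans_lt' one_lt_two)).2

end Posets

theorem glued_simplices_not_twoCM_general
    (k : Type) [Field k] {P : Type} [Fintype P] [PartialOrder P] [OrderBot P]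
    (d : ℕ)
    (hatoms : (Finset.univ.filter fun y : P => IsAtom y).card = d + 1)
    (hrank : posetRank (Set.univ : Set P) = d + 1) :
    (∀ y : P, IsAtom y →
        posetRank (restrictAway (Set.univ : Set P) {y}) < d + 1) ∧
      ¬ IslCMPoset k (Set.univ : Set P) 2 := by
  have hlt : ∀ y : P, IsAtom y → posetRank (restrictAway (Set.univ : Set P) {y}) < d + 1 :=
    fun y hy => hatoms ▸ posetRank_restrictAway_singleton_lt _ hy
  refine ⟨hlt, fun h2CM => ?_⟩
  obtain ⟨y, hy⟩ : ∃ y : P, IsAtom y := by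
    obtain ⟨y, hy⟩ : (Finset.univ.filter fun z : P => IsAtom z).Nonempty :=
      Finset.card_pos.mp (by omega)
    exact ⟨y, (Finset.mem_filter.mp hy).2⟩
  exact (hlt y hy).ne (by rw [h2CM.posetRank_restrictAway_singleton le_rfl hy trivial, hrank])

theorem glued_simplices_not_twoCM
    (k : Type) [Field k] {P : Type} [Fintype P] [PartialOrder P] [OrderBot P]
    (hP : IsSimplicialPoset P) (d : ℕ) (hd1 : 1 ≤ d)
    (hatoms : (Finset.univ.filter fun y : P => IsAtom y).card = d + 1)
    (hrank : posetRank (Set.univ : Set P) = d + 1)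
    (htwo : ∃ m₁ m₂ : P, m₁ ≠ m₂ ∧ (∀ z, m₁ ≤ z → z = m₁) ∧ (∀ z, m₂ ≤ z → z = m₂))
    (hmax : ∀ x : P, (∀ z, x ≤ z → z = x) → ∀ y : P, IsAtom y → y ≤ x) :
    (∀ y : P, IsAtom y →
        posetRank (restrictAway (Set.univ : Set P) {y}) < d + 1) ∧
      ¬ IslCMPoset k (Set.univ : Set P) 2 :=
  glued_simplices_not_twoCM_general k d hatoms hrank
end
end
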